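/- Let M be a combinatorial monoidal model category satisfying the monoid axiom that is enriched over the category of ℚ-vector spaces. Then M satisfies the Σ_n-equivariant monoid axiom: transfinite compositions of pushouts of maps of the form f ⊗_{Σ_n} X, where f has underlying map a trivial cofibration of Σ_n-modules and X is any Σ_n-module, are weak equivalences. Consequently every operad in M is admissible. -/

import Mathlib

/-!
STATEMENT 13: Let `M` be a combinatorial monoidal model category satisfying the monoid
axiom that is enriched over ℚ-vector spaces.  Then `M` satisfies the
`Σ_n`-equivariant monoid axiom: transfinite compositions of pushouts of maps of the
form `f ⊗_{Σ_n} X`, where `f` is a map of `Σ_n`-modules whose underlying map is a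
trivial cofibration and `X` is any `Σ_n`-module, are weak equivalences.
(Consequently — via White's Corollary C.5, which requires a theory of operads not
available here — every operad in `M` is admissible, i.e. the transferred model
structure exists on its algebras.)

Formalization notes.  The model structure enters through its classes `W` (weak
equivalences, closed under retracts) and `TrivCof` (trivial cofibrations).
`Σ_n`-modules are `Action M G` for `G = Σ_n`, and `f ⊗_{Σ_n} X` is the image of
`f ▷ X` under the coinvariants functor `Q` (the colimit over the one-object category
of `G`).  "Transfinite compositions of pushouts of maps in `P`" is abstracted as an
operator `cell` on morphism properties which is monotone and compatible with retracts
(both properties hold for the genuine cell-closure).  The monoid axiom is the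
hypothesis `hmonoid`; the conclusion is the `Σ_n`-equivariant monoid axiom.
-/

open CategoryTheory CategoryTheory.Limits CategoryTheory.MonoidalCategory

universe u

/-- `f` is a retract of `g` in the arrow category. -/
def IsArrowRetract {D : Type*} [Category D] {A B X Y : D} (f : A ⟶ B) (g : X ⟶ Y) : Prop :=
  ∃ (i : Arrow.mk f ⟶ Arrow.mk g) (r : Arrow.mk g ⟶ Arrow.mk f), i ≫ r = 𝟙 (Arrow.mk f)

/-- The class of maps of the form `t ⊗ X` (`t ∈ P`, `X` arbitrary), up to isomorphism
of arrows. -/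
def tensorClass {M : Type*} [Category M] [MonoidalCategory M] (P : MorphismProperty M) :
    MorphismProperty M :=
  fun _ _ h => ∃ (A B : M) (t : A ⟶ B) (X : M),
    P t ∧ Nonempty (Arrow.mk h ≅ Arrow.mk (t ▷ X))

/-!
Over `ℚ` the averaging operator `|G|⁻¹ • ∑ g, ρ g` of a finite group `G` factors through
the coinvariants and splits the projection onto them, naturally in the `G`-object. Hence
`f ⊗_{Σ_n} X` is a retract of `f ⊗ X`, so a cell complex built from the former is a
retract of one built from maps `(trivial cofibration) ⊗ X`, which the monoid axiom makes a
weak equivalence.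
-/

lemma IsArrowRetract.of_iso {D : Type*} [Category D] {A B A' B' X Y : D}
    {f : A ⟶ B} {f' : A' ⟶ B'} {g : X ⟶ Y}
    (e : Arrow.mk f ≅ Arrow.mk f') (h : IsArrowRetract f' g) : IsArrowRetract f g := by
  obtain ⟨i, r, hir⟩ := h
  refine ⟨e.hom ≫ i, r ≫ e.inv, ?_⟩
  rw [Category.assoc, ← Category.assoc i, hir, Category.id_comp, e.hom_inv_id]

namespace CategoryTheory.SingleObj

variable {M : Type*} [Category M] [Preadditive M] [Linear ℚ M]
  {G : Type*} [Group G] [Fintype G]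

noncomputable def average (F : SingleObj G ⥤ M) : F.obj (star G) ⟶ F.obj (star G) :=
  (Fintype.card G : ℚ)⁻¹ • ∑ g : G, F.map g

lemma map_comp_average (F : SingleObj G ⥤ M) (h : G) :
    F.map h ≫ average F = average F := by
  have hmul (g : G) : F.map (h : star G ⟶ star G) ≫ F.map g =
      F.map (show star G ⟶ star G from g * h) :=
    (F.map_comp (X := star G) (Y := star G) (Z := star G) h g).symm
  rw [average, Linear.comp_smul, Preadditive.comp_sum]
  simp_rw [hmul]
  congr 1
  exact Equiv.sum_comp (Equiv.mulRight h) (fun g : G => F.map g)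

lemma average_naturality {F F' : SingleObj G ⥤ M} (φ : F ⟶ F') :
    average F ≫ φ.app (star G) = φ.app (star G) ≫ average F' := by
  simp only [average, Linear.smul_comp, Linear.comp_smul, Preadditive.sum_comp,
    Preadditive.comp_sum, φ.naturality]

lemma average_comp_ι (F : SingleObj G ⥤ M) [HasColimit F] :
    average F ≫ colimit.ι F (star G) = colimit.ι F (star G) := by
  have hw (g : G) : F.map g ≫ colimit.ι F (star G) = colimit.ι F (star G) := colimit.w F g
  rw [average, Linear.smul_comp, Preadditive.sum_comp]
  simp_rw [hw]
  rw [Finset.sum_const, Finset.card_univ, ← Nat.cast_smul_eq_nsmul ℚ, smul_smul,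
    inv_mul_cancel₀ (by exact_mod_cast Fintype.card_ne_zero), one_smul]

noncomputable def colimitSection (F : SingleObj G ⥤ M) [HasColimit F] :
    colimit F ⟶ F.obj (star G) :=
  colimit.desc F
    { pt := F.obj (star G)
      ι :=
        { app := fun _ => average F
          naturality := fun _ _ g => (map_comp_average F g).trans (Category.comp_id _).symm } }

lemma ι_colimitSection (F : SingleObj G ⥤ M) [HasColimit F] (j : SingleObj G) :
    colimit.ι F j ≫ colimitSection F = average F :=
  colimit.ι_desc _ _

lemma colimitSection_comp_ι (F : SingleObj G ⥤ M) [HasColimit F] :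
    colimitSection F ≫ colimit.ι F (star G) = 𝟙 (colimit F) := by
  refine colimit.hom_ext fun j => ?_
  rw [← Category.assoc, ι_colimitSection, average_comp_ι, Category.comp_id]
  rfl

lemma colimitSection_naturality {F F' : SingleObj G ⥤ M} [HasColimit F] [HasColimit F']
    (φ : F ⟶ F') :
    colimitSection F ≫ φ.app (star G) = colimMap φ ≫ colimitSection F' := by
  refine colimit.hom_ext fun j => ?_
  rw [← Category.assoc, ι_colimitSection, ι_colimMap_assoc, ι_colimitSection]
  exact average_naturality φ

theorem isArrowRetract_colimMap {F F' : SingleObj G ⥤ M} [HasColimit F] [HasColimit F']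
    (φ : F ⟶ F') : IsArrowRetract (colimMap φ) (φ.app (star G)) :=
  ⟨Arrow.homMk' _ _ (colimitSection_naturality φ), Arrow.homMk' _ _ (ι_colimMap φ (star G)),
    Arrow.hom_ext _ _ (colimitSection_comp_ι F) (colimitSection_comp_ι F')⟩

end CategoryTheory.SingleObj

theorem isArrowRetract_coinvariants_whiskerRight
    {M : Type*} [Category M] [MonoidalCategory M] [Preadditive M] [Linear ℚ M]
    {G : Type*} [Group G] [Fintype G] [HasColimitsOfShape (SingleObj (MonCat.of G)) M]
    {A B : Action M (MonCat.of G)} (f : A ⟶ B) (X : Action M (MonCat.of G)) :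
    IsArrowRetract (((Action.functorCategoryEquivalence M (MonCat.of G)).functor ⋙ colim).map
      (f ▷ X)) ((Action.forget M _).map f ▷ X.V) :=
  -- definitionally, `Q.map φ` is the `colimMap` of a transformation with component `φ.hom`,
  -- and `(f ▷ X).hom = f.hom ▷ X.V`
  SingleObj.isArrowRetract_colimMap (G := G) _

theorem sigma_n_equivariant_monoid_axiom_general
    {M : Type (u + 1)} [LargeCategory M] [MonoidalCategory M]
    [Preadditive M] [CategoryTheory.Linear ℚ M]  -- `M` is enriched over ℚ-Vect
    (W TrivCof : MorphismProperty M)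
    -- `W` is closed under retracts:
    (hWretract : ∀ {A B X Y : M} (f : A ⟶ B) (g : X ⟶ Y),
      IsArrowRetract f g → W g → W f)
    -- the "transfinite compositions of pushouts" operator, monotone and compatible
    -- with retracts:
    (cell : MorphismProperty M → MorphismProperty M)
    (hcellRetract : ∀ P Q : MorphismProperty M,
      (∀ {A B : M} (f : A ⟶ B), P f → ∃ (X Y : M) (g : X ⟶ Y), Q g ∧ IsArrowRetract f g) →
      (∀ {A B : M} (f : A ⟶ B), cell P f →
        ∃ (X Y : M) (g : X ⟶ Y), cell Q g ∧ IsArrowRetract f g))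
    -- the monoid axiom:
    (hmonoid : ∀ {A B : M} (f : A ⟶ B), cell (tensorClass TrivCof) f → W f)
    (n : ℕ)
    [HasColimitsOfShape
      (SingleObj (MonCat.of (Equiv.Perm (ULift.{u} (Fin n))))) M] :
    -- the Σ_n-equivariant monoid axiom: with
    -- `G = Σ_n`, `Q` the coinvariants functor on `Σ_n`-modules,
    ∀ (Q : Action M (MonCat.of (Equiv.Perm (ULift.{u} (Fin n)))) ⥤ M),
      Q = (Action.functorCategoryEquivalence M
            (MonCat.of (Equiv.Perm (ULift.{u} (Fin n))))).functor ⋙ colim →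
    -- every transfinite composition of pushouts of maps `Q.map (f ▷ X) = f ⊗_{Σ_n} X`
    -- with `f` a map of `Σ_n`-modules whose underlying map is a trivial cofibration
    -- is a weak equivalence:
      ∀ {A B : M} (h : A ⟶ B),
        cell (fun _ _ h' =>
          ∃ (A' B' : Action M (MonCat.of (Equiv.Perm (ULift.{u} (Fin n)))))
            (f : A' ⟶ B')
            (X : Action M (MonCat.of (Equiv.Perm (ULift.{u} (Fin n))))),
            TrivCof ((Action.forget M _).map f) ∧
            Nonempty (Arrow.mk h' ≅ Arrow.mk (Q.map (f ▷ X)))) h →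
        W h := by
  rintro Q rfl A B h hcell
  obtain ⟨_, _, g, hg, hretract⟩ := hcellRetract _ (tensorClass TrivCof)
    (fun _ ⟨_, _, f, X, hf, ⟨e⟩⟩ => ⟨_, _, _, ⟨_, _, _, X.V, hf, ⟨Iso.refl _⟩⟩,
      IsArrowRetract.of_iso e (isArrowRetract_coinvariants_whiskerRight f X)⟩) h hcell
  exact hWretract h g hretract (hmonoid g hg)

theorem sigma_n_equivariant_monoid_axiom
    {M : Type (u + 1)} [LargeCategory M] [MonoidalCategory M]
    [Preadditive M] [CategoryTheory.Linear ℚ M]  -- `M` is enriched over ℚ-Vect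
    (W TrivCof : MorphismProperty M)
    -- `W` is closed under retracts:
    (hWretract : ∀ {A B X Y : M} (f : A ⟶ B) (g : X ⟶ Y),
      IsArrowRetract f g → W g → W f)
    -- the "transfinite compositions of pushouts" operator, monotone and compatible
    -- with retracts:
    (cell : MorphismProperty M → MorphismProperty M)
    (hcellMono : ∀ P Q : MorphismProperty M, P ≤ Q → cell P ≤ cell Q)
    (hcellRetract : ∀ P Q : MorphismProperty M,
      (∀ {A B : M} (f : A ⟶ B), P f → ∃ (X Y : M) (g : X ⟶ Y), Q g ∧ IsArrowRetract f g) →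
      (∀ {A B : M} (f : A ⟶ B), cell P f →
        ∃ (X Y : M) (g : X ⟶ Y), cell Q g ∧ IsArrowRetract f g))
    -- the monoid axiom:
    (hmonoid : ∀ {A B : M} (f : A ⟶ B), cell (tensorClass TrivCof) f → W f)
    (n : ℕ)
    [HasColimitsOfShape
      (SingleObj (MonCat.of (Equiv.Perm (ULift.{u} (Fin n))))) M] :
    -- the Σ_n-equivariant monoid axiom: with
    -- `G = Σ_n`, `Q` the coinvariants functor on `Σ_n`-modules,
    ∀ (Q : Action M (MonCat.of (Equiv.Perm (ULift.{u} (Fin n)))) ⥤ M),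
      Q = (Action.functorCategoryEquivalence M
            (MonCat.of (Equiv.Perm (ULift.{u} (Fin n))))).functor ⋙ colim →
    -- every transfinite composition of pushouts of maps `Q.map (f ▷ X) = f ⊗_{Σ_n} X`
    -- with `f` a map of `Σ_n`-modules whose underlying map is a trivial cofibration
    -- is a weak equivalence:
      ∀ {A B : M} (h : A ⟶ B),
        cell (fun _ _ h' =>
          ∃ (A' B' : Action M (MonCat.of (Equiv.Perm (ULift.{u} (Fin n)))))
            (f : A' ⟶ B')
            (X : Action M (MonCat.of (Equiv.Perm (ULift.{u} (Fin n))))),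
            TrivCof ((Action.forget M _).map f) ∧
            Nonempty (Arrow.mk h' ≅ Arrow.mk (Q.map (f ▷ X)))) h →
        W h :=
  sigma_n_equivariant_monoid_axiom_general W TrivCof hWretract cell hcellRetract hmonoid n
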